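/- Under the setup of the previous item, the matrix α₂^d R_{α₂} − α₁^d R_{α₁} is positive definite for 0 < α₁ < α₂; consequently α₂^{nd}·det(R_{α₂}) > α₁^{nd}·det(R_{α₁}) and for all x ∈ ℝⁿ, α₁^{−d} xᵀ R_{α₁}^{−1} x > α₂^{−d} xᵀ R_{α₂}^{−1} x. -/

import Mathlib

open MeasureTheory Matrix

/-!
Both `R α` and `α₂^d R α₂ − α₁^d R α₁` have entries `∫ cos ⟪ω, sᵢ − sⱼ⟫ g(ω) dω` for a spectral
density `g` (namely `f α`, resp. `α₂^d f α₂ − α₁^d f α₁`), so their quadratic forms are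
`xᵀ M x = ∫ |∑ⱼ xⱼ e^{i⟪ω, sⱼ⟫}|² g(ω) dω`. If `g ≥ 0` is positive off the origin this is positive
for `x ≠ 0`, because the characters `ω ↦ e^{i⟪ω, sⱼ⟫}` of distinct points are linearly
independent. Since `α^d f α ω = c / (1 + ‖ω‖²/α²)^{ν+d/2}`, the difference density is positive off
the origin. The determinant and inverse inequalities then follow from the Loewner-order facts:
if `A` and `B − A` are positive definite, then `det A < det B` and `xᵀB⁻¹x < xᵀA⁻¹x`.
-/

namespace Matrix

variable {n : Type*} [Fintype n] [DecidableEq n]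

lemma one_lt_det_of_posDef_sub_one [Nonempty n] {B : Matrix n n ℝ} (hB : (B - 1).PosDef) :
    1 < B.det := by
  have hBh : B.IsHermitian := by simpa using hB.isHermitian.add isHermitian_one
  have one_lt_eigenvalues : ∀ i, 1 < hBh.eigenvalues i := fun i => by
    set v : n → ℝ := ⇑(hBh.eigenvectorBasis i)
    have hv : v ≠ 0 := fun h =>
      hBh.eigenvectorBasis.orthonormal.ne_zero i (by ext j; exact congr_fun h j)
    have hvv : v ⬝ᵥ v = 1 := by
      have := congrArg (· ^ 2) (hBh.eigenvectorBasis.orthonormal.1 i)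
      rw [← real_inner_self_eq_norm_sq, EuclideanSpace.inner_eq_star_dotProduct] at this
      simpa [v] using this
    have := hB.dotProduct_mulVec_pos hv
    rw [hBh.eigenvalues_eq i]
    simp only [star_trivial, sub_mulVec, one_mulVec, dotProduct_sub, RCLike.re_to_real] at this ⊢
    linarith
  rw [hBh.det_eq_prod_eigenvalues]
  simpa using Finset.prod_lt_prod_of_nonempty (fun _ _ => one_pos)
    (fun i _ => one_lt_eigenvalues i) Finset.univ_nonempty

open scoped MatrixOrder in
lemma det_lt_det_of_posDef_sub [Nonempty n] {A B : Matrix n n ℝ} (hA : A.PosDef)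
    (hAB : (B - A).PosDef) : A.det < B.det := by
  set S := CFC.sqrt A
  have hSS : S * S = A := CFC.sqrt_mul_sqrt_self A hA.posSemidef.nonneg
  have hS : IsUnit S := (CFC.isUnit_sqrt_iff A hA.posSemidef.nonneg).2 hA.isUnit
  have hSd : IsUnit S.det := (isUnit_iff_isUnit_det S).1 hS
  have hS_star : star S⁻¹ = S⁻¹ := by
    rw [star_eq_conjTranspose, conjTranspose_nonsing_inv,
      (CFC.sqrt_nonneg A).posSemidef.isHermitian.eq]
  set C := S⁻¹ * B * S⁻¹
  have hC : (C - 1).PosDef := by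
    have hSA : S⁻¹ * A * S⁻¹ = 1 := by
      rw [← hSS, ← mul_assoc, nonsing_inv_mul _ hSd, one_mul, mul_nonsing_inv _ hSd]
    have := (IsUnit.posDef_star_left_conjugate_iff (isUnit_nonsing_inv_iff.2 hS)).2 hAB
    rwa [hS_star, mul_sub, sub_mul, hSA] at this
  have hB : B = S * C * S := by
    simp only [C, ← mul_assoc, mul_nonsing_inv _ hSd, one_mul]
    rw [mul_assoc, nonsing_inv_mul _ hSd, mul_one]
  rw [hB, det_mul, det_mul, mul_comm, ← mul_assoc, ← det_mul, hSS]
  exact lt_mul_of_one_lt_right hA.det_pos (one_lt_det_of_posDef_sub_one hC)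

lemma dotProduct_inv_mulVec_lt_of_posDef_sub {A B : Matrix n n ℝ} (hA : A.PosDef)
    (hAB : (B - A).PosDef) {x : n → ℝ} (hx : x ≠ 0) :
    x ⬝ᵥ B⁻¹ *ᵥ x < x ⬝ᵥ A⁻¹ *ᵥ x := by
  have hB : B.PosDef := by simpa using hA.add hAB
  set u := A⁻¹ *ᵥ x
  set v := B⁻¹ *ᵥ x
  have hAu : A *ᵥ u = x := by simp [u, mulVec_mulVec, mul_nonsing_inv _ hA.det_pos.ne'.isUnit]
  have hBv : B *ᵥ v = x := by simp [v, mulVec_mulVec, mul_nonsing_inv _ hB.det_pos.ne'.isUnit]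
  have hv : v ≠ 0 := by rintro h; simp [← hBv, h] at hx
  have hA_symm : u ⬝ᵥ A *ᵥ v = x ⬝ᵥ v := by
    rw [dotProduct_mulVec, ← mulVec_transpose, ← conjTranspose_eq_transpose_of_trivial,
      hA.isHermitian.eq, hAu]
  -- `xᵀA⁻¹x − xᵀB⁻¹x = (u − v)ᵀA(u − v) + vᵀ(B − A)v`
  have h₁ : 0 ≤ (u - v) ⬝ᵥ A *ᵥ (u - v) := by
    simpa using hA.posSemidef.dotProduct_mulVec_nonneg (u - v)
  have h₂ : 0 < v ⬝ᵥ (B - A) *ᵥ v := by simpa using hAB.dotProduct_mulVec_pos hv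
  simp only [mulVec_sub, sub_mulVec, dotProduct_sub, sub_dotProduct, hAu, hBv, hA_symm] at h₁ h₂
  linarith [dotProduct_comm x u, dotProduct_comm x v]

lemma dotProduct_inv_smul_mulVec {K : Type*} [Field K] {c : K} (hc : c ≠ 0) {A : Matrix n n K}
    (hA : IsUnit A.det) (x : n → K) : x ⬝ᵥ (c • A)⁻¹ *ᵥ x = c⁻¹ * (x ⬝ᵥ A⁻¹ *ᵥ x) := by
  rw [show (c • A)⁻¹ = c⁻¹ • A⁻¹ from inv_smul' A (Units.mk0 c hc) hA, smul_mulVec,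
    dotProduct_smul, smul_eq_mul]

end Matrix

section ExpInner

open Complex

variable {E : Type*} [NormedAddCommGroup E] [InnerProductSpace ℝ E]

noncomputable def expInnerChar (u : E) : Multiplicative E →* ℂ where
  toFun ω := exp (inner ℝ (Multiplicative.toAdd ω) u * I)
  map_one' := by simp
  map_mul' a b := by simp [inner_add_left, add_mul, exp_add]

lemma expInnerChar_injective : Function.Injective (expInnerChar (E := E)) := by
  intro u u' h
  by_contra hne
  have hv : ‖u - u'‖ ^ 2 ≠ 0 := by simpa [sub_eq_zero] using hne
  -- at this `ω` the two characters differ by the factor `e^{iπ} = -1`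
  set ω := (Real.pi / ‖u - u'‖ ^ 2) • (u - u')
  have hω : inner ℝ ω u - inner ℝ ω u' = Real.pi := by
    rw [← inner_sub_right, real_inner_smul_left, real_inner_self_eq_norm_sq,
      div_mul_cancel₀ _ hv]
  have := DFunLike.congr_fun h (Multiplicative.ofAdd ω)
  simp only [expInnerChar, MonoidHom.coe_mk, OneHom.coe_mk, toAdd_ofAdd] at this
  have h1 : exp (Real.pi * I) = 1 := by
    rw [← hω, ofReal_sub, sub_mul, exp_sub, this, div_self (exp_ne_zero _)]
  rw [exp_pi_mul_I] at h1
  norm_num at h1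

lemma linearIndependent_exp_inner {ι : Type*} {s : ι → E} (hs : Function.Injective s) :
    LinearIndependent ℂ (fun j (ω : E) => exp (inner ℝ ω (s j) * I)) :=
  (linearIndependent_monoidHom (Multiplicative E) ℂ).comp (fun j => expInnerChar (s j))
    (expInnerChar_injective.comp hs)

lemma sum_sum_mul_cos_sub_eq_norm_sq {ι : Type*} [Fintype ι] (x a : ι → ℝ) :
    ∑ i, ∑ j, x i * x j * Real.cos (a i - a j) = ‖∑ j, (x j : ℂ) * exp (a j * I)‖ ^ 2 := by
  have hre : (∑ j, (x j : ℂ) * exp (a j * I)).re = ∑ j, x j * Real.cos (a j) := by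
    simp [re_sum, exp_ofReal_mul_I_re]
  have him : (∑ j, (x j : ℂ) * exp (a j * I)).im = ∑ j, x j * Real.sin (a j) := by
    simp [im_sum, exp_ofReal_mul_I_im]
  rw [← normSq_eq_norm_sq, normSq_apply, hre, him, Finset.sum_mul_sum, Finset.sum_mul_sum,
    ← Finset.sum_add_distrib]
  refine Finset.sum_congr rfl fun i _ => ?_
  rw [← Finset.sum_add_distrib]
  refine Finset.sum_congr rfl fun j _ => ?_
  rw [Real.cos_sub]
  ring

end ExpInner

section SpectralCovMatrix

open Complex

variable {E ι : Type*} [NormedAddCommGroup E] [InnerProductSpace ℝ E] [MeasurableSpace E]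
  {μ : Measure E} {g g₁ g₂ : E → ℝ}

-- the covariance matrix at the sites `s` of a stationary random field with spectral density `g`
noncomputable def spectralCovMatrix (μ : Measure E) (g : E → ℝ) (s : ι → E) : Matrix ι ι ℝ :=
  Matrix.of fun i j => ∫ ω, Real.cos (inner ℝ ω (s i - s j)) * g ω ∂μ

lemma spectralCovMatrix_const_mul (c : ℝ) (s : ι → E) :
    spectralCovMatrix μ (fun ω => c * g ω) s = c • spectralCovMatrix μ g s := by
  ext i j
  simp only [spectralCovMatrix, of_apply, Matrix.smul_apply, smul_eq_mul, ← integral_const_mul]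
  congr 1 with ω
  ring

lemma isHermitian_spectralCovMatrix (μ : Measure E) (g : E → ℝ) (s : ι → E) :
    (spectralCovMatrix μ g s).IsHermitian := by
  ext i j
  simp only [spectralCovMatrix, conjTranspose_apply, of_apply, star_trivial]
  congr 1 with ω
  rw [← neg_sub, inner_neg_right, Real.cos_neg]

variable [BorelSpace E]

lemma integrable_cos_inner_mul (hg : Integrable g μ) (u : E) :
    Integrable (fun ω => Real.cos (inner ℝ ω u) * g ω) μ :=
  hg.bdd_mul (by fun_prop) (.of_forall fun ω => by simpa using Real.abs_cos_le_one _)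

lemma spectralCovMatrix_sub (hg₁ : Integrable g₁ μ) (hg₂ : Integrable g₂ μ) (s : ι → E) :
    spectralCovMatrix μ (g₁ - g₂) s = spectralCovMatrix μ g₁ s - spectralCovMatrix μ g₂ s := by
  ext i j
  simp only [spectralCovMatrix, of_apply, Matrix.sub_apply, Pi.sub_apply, mul_sub]
  exact integral_sub (integrable_cos_inner_mul hg₁ _) (integrable_cos_inner_mul hg₂ _)

variable [Fintype ι]

lemma dotProduct_spectralCovMatrix_mulVec (hg : Integrable g μ) (s : ι → E) (x : ι → ℝ) :
    x ⬝ᵥ spectralCovMatrix μ g s *ᵥ x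
      = ∫ ω, ‖∑ j, (x j : ℂ) * exp (inner ℝ ω (s j) * I)‖ ^ 2 * g ω ∂μ := by
  have hint : ∀ i j,
      Integrable (fun ω => x i * x j * (Real.cos (inner ℝ ω (s i - s j)) * g ω)) μ :=
    fun i j => (integrable_cos_inner_mul hg _).const_mul _
  calc x ⬝ᵥ spectralCovMatrix μ g s *ᵥ x
      = ∑ i, ∑ j, ∫ ω, x i * x j * (Real.cos (inner ℝ ω (s i - s j)) * g ω) ∂μ := by
        simp only [dotProduct, mulVec, Finset.mul_sum, spectralCovMatrix, of_apply,
          integral_const_mul]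
        exact Finset.sum_congr rfl fun i _ => Finset.sum_congr rfl fun j _ => by ring
    _ = ∫ ω, ∑ i, ∑ j, x i * x j * (Real.cos (inner ℝ ω (s i - s j)) * g ω) ∂μ := by
        rw [integral_finsetSum _ fun i _ => integrable_finsetSum _ fun j _ => hint i j]
        exact Finset.sum_congr rfl fun i _ => (integral_finsetSum _ fun j _ => hint i j).symm
    _ = ∫ ω, ‖∑ j, (x j : ℂ) * exp (inner ℝ ω (s j) * I)‖ ^ 2 * g ω ∂μ := by
        simp_rw [← sum_sum_mul_cos_sub_eq_norm_sq, Finset.sum_mul, inner_sub_right, mul_assoc]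

lemma posDef_spectralCovMatrix [Nontrivial E] [μ.IsOpenPosMeasure] (hg : Integrable g μ)
    (hg₀ : 0 ≤ g) (hg_pos : ∀ ω, ω ≠ 0 → 0 < g ω) {s : ι → E} (hs : Function.Injective s) :
    (spectralCovMatrix μ g s).PosDef := by
  refine .of_dotProduct_mulVec_pos (isHermitian_spectralCovMatrix μ g s) fun x hx => ?_
  set F : E → ℂ := fun ω => ∑ j, (x j : ℂ) * exp (inner ℝ ω (s j) * I)
  have hFc : Continuous F := by fun_prop
  have hF_bound : ∀ ω, ‖F ω‖ ≤ ∑ j, |x j| := fun ω =>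
    (norm_sum_le _ _).trans_eq (by simp [norm_exp_ofReal_mul_I])
  have hF_ne : ∃ ω, F ω ≠ 0 := by
    by_contra! h
    have := Fintype.linearIndependent_iff.1 (linearIndependent_exp_inner hs) (fun j => (x j : ℂ))
      (funext fun ω => by simpa [F] using h ω)
    exact hx (funext fun j => by simpa using this j)
  have hint : Integrable (fun ω => ‖F ω‖ ^ 2 * g ω) μ :=
    hg.bdd_mul (c := (∑ j, |x j|) ^ 2) (by fun_prop) (.of_forall fun ω => by
      simpa using pow_le_pow_left₀ (norm_nonneg _) (hF_bound ω) 2)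
  rw [star_trivial, dotProduct_spectralCovMatrix_mulVec hg,
    integral_pos_iff_support_of_nonneg (fun ω => mul_nonneg (sq_nonneg ‖F ω‖) (hg₀ ω)) hint]
  have hU : IsOpen ({ω | F ω ≠ 0} ∩ {0}ᶜ) :=
    (isOpen_ne_fun hFc continuous_const).inter isOpen_compl_singleton
  have hU_ne : ({ω | F ω ≠ 0} ∩ {0}ᶜ).Nonempty :=
    (dense_compl_singleton (0 : E)).inter_open_nonempty _ (isOpen_ne_fun hFc continuous_const)
      hF_ne
  refine (hU.measure_pos μ hU_ne).trans_le (measure_mono fun ω ⟨hFω, hω⟩ => ?_)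
  exact mul_ne_zero (pow_ne_zero _ (norm_ne_zero_iff.2 hFω)) (hg_pos ω hω).ne'

end SpectralCovMatrix

section Matern

variable {d : ℕ} {ν a : ℝ}

noncomputable def maternSpectralDensity (d : ℕ) (ν a : ℝ) (ω : EuclideanSpace ℝ (Fin d)) : ℝ :=
  Real.Gamma (ν + (d : ℝ) / 2) / Real.Gamma ν * a ^ (2 * ν) /
    (Real.pi ^ ((d : ℝ) / 2) * (a ^ 2 + ‖ω‖ ^ 2) ^ (ν + (d : ℝ) / 2))

noncomputable def maternConst (d : ℕ) (ν : ℝ) : ℝ :=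
  Real.Gamma (ν + (d : ℝ) / 2) / Real.Gamma ν / Real.pi ^ ((d : ℝ) / 2)

lemma maternConst_pos (hν : 0 < ν) : 0 < maternConst d ν := by
  have := Real.Gamma_pos_of_pos hν
  have := Real.Gamma_pos_of_pos (by positivity : 0 < ν + (d : ℝ) / 2)
  unfold maternConst
  positivity

lemma maternSpectralDensity_pos (hν : 0 < ν) (ha : 0 < a) (ω : EuclideanSpace ℝ (Fin d)) :
    0 < maternSpectralDensity d ν a ω := by
  have := Real.Gamma_pos_of_pos hν
  have := Real.Gamma_pos_of_pos (by positivity : 0 < ν + (d : ℝ) / 2)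
  unfold maternSpectralDensity
  positivity

lemma pow_mul_maternSpectralDensity (ha : 0 < a) (ω : EuclideanSpace ℝ (Fin d)) :
    a ^ d * maternSpectralDensity d ν a ω
      = maternConst d ν / (1 + ‖ω‖ ^ 2 / a ^ 2) ^ (ν + (d : ℝ) / 2) := by
  have hsplit : a ^ 2 + ‖ω‖ ^ 2 = a ^ 2 * (1 + ‖ω‖ ^ 2 / a ^ 2) := by field_simp
  have hpow : a ^ d * a ^ (2 * ν) = (a ^ 2) ^ (ν + (d : ℝ) / 2) := by
    rw [← Real.rpow_natCast, ← Real.rpow_add ha, ← Real.rpow_natCast a 2, ← Real.rpow_mul ha.le]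
    ring_nf
  have hp : 0 < (a ^ 2) ^ (ν + (d : ℝ) / 2) := by positivity
  rw [maternSpectralDensity, maternConst, hsplit, Real.mul_rpow (by positivity) (by positivity)]
  calc _ = Real.Gamma (ν + (d : ℝ) / 2) / Real.Gamma ν / Real.pi ^ ((d : ℝ) / 2) *
        (a ^ d * a ^ (2 * ν)) / ((a ^ 2) ^ (ν + (d : ℝ) / 2) *
          (1 + ‖ω‖ ^ 2 / a ^ 2) ^ (ν + (d : ℝ) / 2)) := by ring
    _ = _ := by rw [hpow]; field_simp

lemma integrable_maternSpectralDensity (hν : 0 < ν) (ha : 0 < a) :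
    Integrable (maternSpectralDensity d ν a) := by
  have hr : (Module.finrank ℝ (EuclideanSpace ℝ (Fin d)) : ℝ) < 2 * ν + d := by simpa using hν
  have := ((integrable_rpow_neg_one_add_norm_sq (μ := volume) hr).comp_smul
    (inv_ne_zero ha.ne')).const_mul
    ((a ^ d)⁻¹ * maternConst d ν)
  refine this.congr (.of_forall fun ω => ?_)
  have hX : (1 + ‖a⁻¹ • ω‖ ^ 2) ^ (-(2 * ν + d) / 2)
      = ((1 + ‖ω‖ ^ 2 / a ^ 2) ^ (ν + (d : ℝ) / 2))⁻¹ := by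
    rw [norm_smul, norm_inv, Real.norm_of_nonneg ha.le, ← Real.rpow_neg (by positivity)]
    ring_nf
  dsimp only
  rw [hX, mul_assoc, inv_mul_eq_iff_eq_mul₀ (pow_ne_zero d ha.ne'), pow_mul_maternSpectralDensity ha]
  ring

lemma pow_mul_maternSpectralDensity_le (hν : 0 < ν) (ha : 0 < a) {b : ℝ} (hab : a ≤ b)
    (ω : EuclideanSpace ℝ (Fin d)) :
    a ^ d * maternSpectralDensity d ν a ω ≤ b ^ d * maternSpectralDensity d ν b ω := by
  rw [pow_mul_maternSpectralDensity ha, pow_mul_maternSpectralDensity (ha.trans_le hab)]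
  have := maternConst_pos (d := d) hν
  gcongr

lemma pow_mul_maternSpectralDensity_lt (hν : 0 < ν) (ha : 0 < a) {b : ℝ} (hab : a < b)
    {ω : EuclideanSpace ℝ (Fin d)} (hω : ω ≠ 0) :
    a ^ d * maternSpectralDensity d ν a ω < b ^ d * maternSpectralDensity d ν b ω := by
  rw [pow_mul_maternSpectralDensity ha, pow_mul_maternSpectralDensity (ha.trans hab)]
  have := maternConst_pos (d := d) hν
  have : 0 < ‖ω‖ := norm_pos_iff.2 hω
  gcongr

variable [NeZero d] {n : ℕ} {s : Fin n → EuclideanSpace ℝ (Fin d)}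

lemma posDef_spectralCovMatrix_matern (hν : 0 < ν) (ha : 0 < a) (hs : Function.Injective s) :
    (spectralCovMatrix volume (maternSpectralDensity d ν a) s).PosDef :=
  posDef_spectralCovMatrix (integrable_maternSpectralDensity hν ha)
    (fun ω => (maternSpectralDensity_pos hν ha ω).le) (fun ω _ => maternSpectralDensity_pos hν ha ω)
    hs

lemma posDef_pow_smul_spectralCovMatrix_matern_sub (hν : 0 < ν) {b : ℝ} (ha : 0 < a) (hab : a < b)
    (hs : Function.Injective s) :
    (b ^ d • spectralCovMatrix volume (maternSpectralDensity d ν b) s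
      - a ^ d • spectralCovMatrix volume (maternSpectralDensity d ν a) s).PosDef := by
  have hint : ∀ c, 0 < c → Integrable (fun ω => c ^ d * maternSpectralDensity d ν c ω) :=
    fun c hc => (integrable_maternSpectralDensity hν hc).const_mul _
  rw [← spectralCovMatrix_const_mul, ← spectralCovMatrix_const_mul,
    ← spectralCovMatrix_sub (hint b (ha.trans hab)) (hint a ha)]
  exact posDef_spectralCovMatrix ((hint b (ha.trans hab)).sub (hint a ha))
    (fun ω => sub_nonneg.2 (pow_mul_maternSpectralDensity_le hν ha hab.le ω))
    (fun ω hω => sub_pos.2 (pow_mul_maternSpectralDensity_lt hν ha hab hω)) hs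

end Matern

theorem stmt8_general (d n : ℕ) (hd : d = 1 ∨ d = 2 ∨ d = 3) (hn : 0 < n) (ν : ℝ) (hν : 0 < ν)
    (s : Fin n → EuclideanSpace ℝ (Fin d)) (hs : Function.Injective s)
    (α₁ α₂ : ℝ) (hα₁ : 0 < α₁) (hα : α₁ < α₂)
    (f : ℝ → EuclideanSpace ℝ (Fin d) → ℝ)
    (hf : ∀ a ω, f a ω = Real.Gamma (ν + (d : ℝ) / 2) / Real.Gamma ν * a ^ (2 * ν) /
        (Real.pi ^ ((d : ℝ) / 2) * (a ^ 2 + ‖ω‖ ^ 2) ^ (ν + (d : ℝ) / 2)))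
    (R : ℝ → Matrix (Fin n) (Fin n) ℝ)
    (hR : ∀ a i j, R a i j = ∫ ω, Real.cos ((inner ℝ ω (s i - s j) : ℝ)) * f a ω) :
    (α₂ ^ d • R α₂ - α₁ ^ d • R α₁).PosDef ∧
    α₁ ^ (n * d) * (R α₁).det < α₂ ^ (n * d) * (R α₂).det ∧
    (∀ x : Fin n → ℝ, x ≠ 0 →
      α₂ ^ (-(d : ℝ)) * (x ⬝ᵥ (R α₂)⁻¹ *ᵥ x) < α₁ ^ (-(d : ℝ)) * (x ⬝ᵥ (R α₁)⁻¹ *ᵥ x)) := by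
  have : NeZero d := ⟨by omega⟩
  have : Nonempty (Fin n) := ⟨⟨0, hn⟩⟩
  have hα₂ : 0 < α₂ := hα₁.trans hα
  obtain rfl : f = maternSpectralDensity d ν := funext fun a => funext (hf a)
  obtain rfl : R = fun a => spectralCovMatrix volume (maternSpectralDensity d ν a) s :=
    funext fun a => Matrix.ext (hR a)
  beta_reduce
  have hM := posDef_pow_smul_spectralCovMatrix_matern_sub hν hα₁ hα hs
  have hR_pos := fun a (ha : 0 < a) => posDef_spectralCovMatrix_matern hν ha hs
  have hA := (hR_pos α₁ hα₁).smul (pow_pos hα₁ d)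
  refine ⟨hM, ?_, fun x hx => ?_⟩
  · have := det_lt_det_of_posDef_sub hA hM
    rwa [det_smul, det_smul, Fintype.card_fin, ← pow_mul, ← pow_mul, mul_comm d n] at this
  · rw [Real.rpow_neg hα₂.le, Real.rpow_neg hα₁.le, Real.rpow_natCast, Real.rpow_natCast,
      ← dotProduct_inv_smul_mulVec (pow_pos hα₂ d).ne' (hR_pos α₂ hα₂).det_pos.ne'.isUnit,
      ← dotProduct_inv_smul_mulVec (pow_pos hα₁ d).ne' (hR_pos α₁ hα₁).det_pos.ne'.isUnit]
    exact dotProduct_inv_mulVec_lt_of_posDef_sub hA hM hx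

/-- Under the Matérn setup (spectral characterization of `R α`), for `0 < α₁ < α₂`
the matrix `α₂^d R α₂ − α₁^d R α₁` is positive definite; consequently
`α₂^{nd}·det(R α₂) > α₁^{nd}·det(R α₁)` and for all nonzero `x`,
`α₁^{−d} xᵀR_{α₁}⁻¹x > α₂^{−d} xᵀR_{α₂}⁻¹x`. -/
theorem stmt8 (d n : ℕ) (hd : d = 1 ∨ d = 2 ∨ d = 3) (hn : 0 < n) (ν : ℝ) (hν : 0 < ν)
    (s : Fin n → EuclideanSpace ℝ (Fin d)) (hs : Function.Injective s)
    (α₁ α₂ : ℝ) (hα₁ : 0 < α₁) (hα : α₁ < α₂)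
    (f : ℝ → EuclideanSpace ℝ (Fin d) → ℝ)
    (hf : ∀ a ω, f a ω = Real.Gamma (ν + (d : ℝ) / 2) / Real.Gamma ν * a ^ (2 * ν) /
        (Real.pi ^ ((d : ℝ) / 2) * (a ^ 2 + ‖ω‖ ^ 2) ^ (ν + (d : ℝ) / 2)))
    (R : ℝ → Matrix (Fin n) (Fin n) ℝ)
    (hR : ∀ a i j, R a i j = ∫ ω, Real.cos ((inner ℝ ω (s i - s j) : ℝ)) * f a ω)
    (hR₁ : (R α₁).PosDef) (hR₂ : (R α₂).PosDef) :
    (α₂ ^ d • R α₂ - α₁ ^ d • R α₁).PosDef ∧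
    α₁ ^ (n * d) * (R α₁).det < α₂ ^ (n * d) * (R α₂).det ∧
    (∀ x : Fin n → ℝ, x ≠ 0 →
      α₂ ^ (-(d : ℝ)) * (x ⬝ᵥ (R α₂)⁻¹ *ᵥ x) < α₁ ^ (-(d : ℝ)) * (x ⬝ᵥ (R α₁)⁻¹ *ᵥ x)) :=
  stmt8_general d n hd hn ν hν s hs α₁ α₂ hα₁ hα f hf R hR
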